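/- Suppose λ_1 ≥ λ_2 ≥ ... ≥ λ_n are real numbers with Σ_{i=1}^n arctan(λ_i) ≥ (n-2)·π/2 + δ for some δ > 0 (n ≥ 2). Then λ_n ≥ -tan(π/2 - δ), i.e., λ_n is bounded below by a constant depending only on δ. -/
import Mathlib


open Real

theorem supercritical_lower_bound (n : ℕ) (hn : 2 ≤ n) (lam : Fin n → ℝ)
    (hmono : ∀ i j : Fin n, i ≤ j → lam j ≤ lam i) (δ : ℝ) (hδ : 0 < δ)
    (hsum : (n - 2 : ℝ) * (π / 2) + δ ≤ ∑ i, arctan (lam i)) :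
    -tan (π / 2 - δ) ≤ lam ⟨n - 1, by omega⟩ := by
  set j : Fin n := ⟨n - 1, by omega⟩ with hj
  have hsplit : (∑ i, arctan (lam i))
      = arctan (lam j) + ∑ i ∈ Finset.univ.erase j, arctan (lam i) :=
    (Finset.add_sum_erase _ _ (Finset.mem_univ j)).symm
  have hcard : (Finset.univ.erase j).card = n - 1 := by
    rw [Finset.card_erase_of_mem (Finset.mem_univ j), Finset.card_univ, Fintype.card_fin]
  have hrest : ∑ i ∈ Finset.univ.erase j, arctan (lam i) < (n - 1 : ℝ) * (π / 2) := by
    have hne : (Finset.univ.erase j).Nonempty := by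
      rw [← Finset.card_pos, hcard]; omega
    calc ∑ i ∈ Finset.univ.erase j, arctan (lam i)
        < ∑ _i ∈ Finset.univ.erase j, (π / 2) :=
          Finset.sum_lt_sum_of_nonempty hne fun i _ => arctan_lt_pi_div_two _
      _ = (n - 1 : ℝ) * (π / 2) := by
          rw [Finset.sum_const, hcard, nsmul_eq_mul]
          congr 1
          have : (1 : ℝ) ≤ n := by exact_mod_cast Nat.one_le_of_lt hn
          push_cast [Nat.cast_sub (by omega : 1 ≤ n)]
          ring
  have key : δ - π / 2 < arctan (lam j) := by
    have := hsplit ▸ hsum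
    nlinarith [this, hrest]
  have h1 : -(π / 2) < δ - π / 2 := by
    have := pi_pos; linarith
  have h2 : tan (δ - π / 2) < tan (arctan (lam j)) := by
    apply Real.tan_lt_tan_of_lt_of_lt_pi_div_two h1 (arctan_lt_pi_div_two _) key
  rw [tan_arctan] at h2
  have : -tan (π / 2 - δ) = tan (δ - π / 2) := by
    rw [← Real.tan_neg, neg_sub]
  linarith [this ▸ h2]
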